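/- arXiv:1503.07643 — 4 statements merged into one kernel-verified Lean document; each statement's English description precedes it below -/
import Mathlib

section
/- Let c ≥ 0 be a real number and define f : (0,∞) → ℝ by f(ρ) = 1/(cosh ρ + c). Then for every ρ > 0, f''(ρ) + (cosh ρ / sinh ρ) · f'(ρ) = −2·(1 + c·cosh ρ)/(cosh ρ + c)³, and in particular this quantity is strictly negative. Hence f is a non-constant positive function that is superharmonic with respect to the radial hyperbolic Laplacian. -/
/-! With `u = cosh ρ + c`, differentiating `1 / u` twice gives
`(2 sinh² ρ - u cosh ρ) / u³`, and the drift term contributes `-cosh² ρ / u²`.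
After `cosh² - sinh² = 1` the sum collapses to `-2 (1 + c cosh ρ) / u³`, which is negative
as soon as `c ≥ 0`. -/

open Real

noncomputable def radialLaplacian (h : ℝ → ℝ) (ρ : ℝ) : ℝ :=
  deriv (deriv h) ρ + cosh ρ / sinh ρ * deriv h ρ

section

variable {c : ℝ}

lemma cosh_add_pos (hc : -1 < c) (t : ℝ) : 0 < cosh t + c := by
  linarith [one_le_cosh t]

lemma deriv_one_div_cosh_add (hc : -1 < c) :
    deriv (fun t ↦ 1 / (cosh t + c)) = fun t ↦ -sinh t / (cosh t + c) ^ 2 := by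
  funext t
  have h := (hasDerivAt_const t (1 : ℝ)).fun_div ((hasDerivAt_cosh t).add_const c)
    (cosh_add_pos hc t).ne'
  exact (h.congr_deriv (by ring)).deriv

lemma deriv_deriv_one_div_cosh_add (hc : -1 < c) (t : ℝ) :
    deriv (deriv fun t ↦ 1 / (cosh t + c)) t
      = (2 * sinh t ^ 2 - cosh t * (cosh t + c)) / (cosh t + c) ^ 3 := by
  have hu := (cosh_add_pos hc t).ne'
  have h := (hasDerivAt_sinh t).neg.fun_div (((hasDerivAt_cosh t).add_const c).pow 2)
    (pow_ne_zero 2 hu)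
  rw [deriv_one_div_cosh_add hc]
  exact (h.congr_deriv (by simp only [Pi.pow_apply, Pi.neg_apply]; field_simp; ring)).deriv

lemma radialLaplacian_one_div_cosh_add (hc : -1 < c) {ρ : ℝ} (hρ : ρ ≠ 0) :
    radialLaplacian (fun t ↦ 1 / (cosh t + c)) ρ
      = -2 * (1 + c * cosh ρ) / (cosh ρ + c) ^ 3 := by
  have hu := (cosh_add_pos hc ρ).ne'
  have hs : sinh ρ ≠ 0 := sinh_ne_zero.mpr hρ
  rw [radialLaplacian, deriv_deriv_one_div_cosh_add hc, deriv_one_div_cosh_add hc]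
  field_simp
  linear_combination (-2) * cosh_sq' ρ

lemma radialLaplacian_one_div_cosh_add_neg (hc : 0 ≤ c) {ρ : ℝ} (hρ : ρ ≠ 0) :
    radialLaplacian (fun t ↦ 1 / (cosh t + c)) ρ < 0 := by
  rw [radialLaplacian_one_div_cosh_add (by linarith) hρ]
  have hu := cosh_add_pos (by linarith : -1 < c) ρ
  have hnum : 0 < 1 + c * cosh ρ := by positivity
  exact div_neg_of_neg_of_pos (by linarith) (by positivity)

end

theorem radial_hyperbolic_superharmonic
    (c : ℝ) (hc : 0 ≤ c) :
    (∀ ρ : ℝ, 0 < ρ →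
      deriv (deriv (fun t : ℝ => 1 / (Real.cosh t + c))) ρ
          + (Real.cosh ρ / Real.sinh ρ)
              * deriv (fun t : ℝ => 1 / (Real.cosh t + c)) ρ
        = -2 * (1 + c * Real.cosh ρ) / (Real.cosh ρ + c) ^ 3)
    ∧ (∀ ρ : ℝ, 0 < ρ →
        deriv (deriv (fun t : ℝ => 1 / (Real.cosh t + c))) ρ
            + (Real.cosh ρ / Real.sinh ρ)
                * deriv (fun t : ℝ => 1 / (Real.cosh t + c)) ρ < 0)
    ∧ (∀ ρ : ℝ, 0 < ρ → 0 < 1 / (Real.cosh ρ + c))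
    ∧ (∃ ρ₁ ρ₂ : ℝ, 0 < ρ₁ ∧ 0 < ρ₂ ∧
        1 / (Real.cosh ρ₁ + c) ≠ 1 / (Real.cosh ρ₂ + c)) := by
  have hc' : -1 < c := by linarith
  refine ⟨fun ρ hρ ↦ radialLaplacian_one_div_cosh_add hc' hρ.ne',
    fun ρ hρ ↦ radialLaplacian_one_div_cosh_add_neg hc hρ.ne',
    fun ρ _ ↦ one_div_pos.mpr (cosh_add_pos hc' ρ), 1, 2, one_pos, two_pos, ?_⟩
  have h12 : cosh 1 < cosh 2 := cosh_lt_cosh.mpr (by norm_num)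
  exact (one_div_lt_one_div_of_lt (cosh_add_pos hc' 1) (by linarith)).ne'
end

section
/- Let d ≥ 1, let s₁,…,s_d > 0 be real constants, and define h : (0,∞)^d → ℝ by h(λ) = (λ₁/s₁ + ⋯ + λ_d/s_d)^(−(d/2−1)). Then for every λ ∈ (0,∞)^d: Σᵢ sᵢ · ( λᵢ · ∂²h/∂λᵢ²(λ) + (1/2) · ∂h/∂λᵢ(λ) ) = 0; that is, h is harmonic with respect to the Poisson predictive Laplacian. -/
/-- The `i`-th partial derivative of `h : (Fin d → ℝ) → ℝ`. -/
noncomputable def pderiv1 {d : ℕ} (i : Fin d) (h : (Fin d → ℝ) → ℝ) (x : Fin d → ℝ) : ℝ :=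
  fderiv ℝ h x (Pi.single i 1)

/-- The second partial derivative `∂ᵢ∂ᵢ h`. -/
noncomputable def pderiv2 {d : ℕ} (i j : Fin d) (h : (Fin d → ℝ) → ℝ) (x : Fin d → ℝ) : ℝ :=
  pderiv1 i (pderiv1 j h) x

noncomputable def Lmap {d : ℕ} (s : Fin d → ℝ) : (Fin d → ℝ) →L[ℝ] ℝ :=
  ∑ j, (s j)⁻¹ • (ContinuousLinearMap.proj j : (Fin d → ℝ) →L[ℝ] ℝ)

lemma Lmap_apply {d : ℕ} (s : Fin d → ℝ) (m : Fin d → ℝ) :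
    Lmap s m = ∑ j, m j / s j := by
  simp [Lmap, div_eq_mul_inv, mul_comm]

lemma Lmap_single {d : ℕ} (s : Fin d → ℝ) (i : Fin d) :
    Lmap s (Pi.single i 1) = (s i)⁻¹ := by
  rw [Lmap_apply, Finset.sum_eq_single i]
  · simp
  · intro b _ hb; simp [Pi.single_apply, hb]
  · simp

lemma hasFDerivAt_hfun {d : ℕ} (s : Fin d → ℝ) (c : ℝ) (x : Fin d → ℝ)
    (hx : 0 < ∑ j, x j / s j) :
    HasFDerivAt (fun m => (∑ j, m j / s j) ^ c)
      ((c * (∑ j, x j / s j) ^ (c - 1)) • Lmap s) x := by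
  have h1 := (Lmap s).hasFDerivAt (x := x)
  have heq : ⇑(Lmap s) = fun m => ∑ j, m j / s j := funext (Lmap_apply s)
  rw [heq] at h1
  exact h1.rpow_const (Or.inl hx.ne')

lemma pderiv1_eq {d : ℕ} (s : Fin d → ℝ) (c : ℝ) (x : Fin d → ℝ)
    (hx : 0 < ∑ j, x j / s j) (i : Fin d) :
    pderiv1 i (fun m => (∑ j, m j / s j) ^ c) x
      = c * (∑ j, x j / s j) ^ (c - 1) * (s i)⁻¹ := by
  rw [pderiv1, (hasFDerivAt_hfun s c x hx).fderiv]
  simp [Lmap_single, mul_assoc]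

lemma pderiv2_eq {d : ℕ} (s : Fin d → ℝ) (c : ℝ) (x : Fin d → ℝ)
    (hx : 0 < ∑ j, x j / s j) (i : Fin d) :
    pderiv2 i i (fun m => (∑ j, m j / s j) ^ c) x
      = c * (c - 1) * (∑ j, x j / s j) ^ (c - 2) * (s i)⁻¹ * (s i)⁻¹ := by
  have hopen : IsOpen {m : Fin d → ℝ | 0 < ∑ j, m j / s j} := by
    have hcont : Continuous fun m : Fin d → ℝ => ∑ j, m j / s j := by
      continuity
    exact isOpen_lt continuous_const hcont
  have hev : pderiv1 i (fun m => (∑ j, m j / s j) ^ c)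
      =ᶠ[nhds x] fun m => c * (∑ j, m j / s j) ^ (c - 1) * (s i)⁻¹ := by
    filter_upwards [hopen.mem_nhds hx] with m hm
    exact pderiv1_eq s c m hm i
  have h2 := ((hasFDerivAt_hfun s (c - 1) x hx).const_mul c).mul_const ((s i)⁻¹)
  rw [pderiv2, pderiv1, hev.fderiv_eq, h2.fderiv]
  simp only [ContinuousLinearMap.coe_smul', Pi.smul_apply, Lmap_single, smul_eq_mul,
    div_eq_mul_inv]
  ring_nf

theorem poisson_shrinkage_factor_harmonic
    (d : ℕ) (hd : 1 ≤ d) (s : Fin d → ℝ) (hs : ∀ i, 0 < s i) :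
    ∀ l : Fin d → ℝ, (∀ i, 0 < l i) →
      ∑ i, s i *
          (l i * pderiv2 i i (fun m => (∑ j, m j / s j) ^ (-((d : ℝ) / 2 - 1))) l
            + (1 / 2) * pderiv1 i (fun m => (∑ j, m j / s j) ^ (-((d : ℝ) / 2 - 1))) l)
        = 0 := by
  intro l hl
  set c : ℝ := -((d : ℝ) / 2 - 1) with hc
  have hT : 0 < ∑ j, l j / s j := by
    apply Finset.sum_pos
    · intro j _; exact div_pos (hl j) (hs j)
    · exact Finset.univ_nonempty_iff.mpr (Fin.pos_iff_nonempty.mp hd)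
  set T : ℝ := ∑ j, l j / s j with hTdef
  have key : ∀ i : Fin d, s i *
          (l i * pderiv2 i i (fun m => (∑ j, m j / s j) ^ c) l
            + (1 / 2) * pderiv1 i (fun m => (∑ j, m j / s j) ^ c) l)
      = (l i / s i) * (c * (c - 1) * T ^ (c - 2)) + (1 / 2) * (c * T ^ (c - 1)) := by
    intro i
    rw [pderiv2_eq s c l hT i, pderiv1_eq s c l hT i]
    have hsne : s i ≠ 0 := (hs i).ne'
    field_simp
    ring
  rw [Finset.sum_congr rfl (fun i _ => key i), Finset.sum_add_distrib,
    ← Finset.sum_mul, Finset.sum_const, Finset.card_univ,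
    Fintype.card_fin, nsmul_eq_mul]
  have hTT : T ^ (c - 2) * T = T ^ (c - 1) := by
    rw [← Real.rpow_add_one hT.ne' (c - 2), show c - 2 + 1 = c - 1 from by ring]
  rw [← hTdef]
  linear_combination (c * (c - 1)) * hTT
end

section
/- Let d ≥ 1, let s₁,…,s_d > 0 be real constants, and define h : (0,∞)^d → ℝ by h(λ) = (λ₁/s₁ + ⋯ + λ_d/s_d)^(−(d/2−1)). Then for every λ ∈ (0,∞)^d: (Δ̊ h)(λ)/h(λ) − (1/2)·Σᵢ sᵢ λᵢ · ( ∂h/∂λᵢ(λ) / h(λ) )² = −(1/2)·(d/2 − 1)² · (λ₁/s₁ + ⋯ + λ_d/s_d)⁻¹, where Δ̊ is the Poisson predictive Laplacian. Equivalently, since Δ̊ h = 0, one has (1/2)·Σᵢ sᵢ λᵢ (∂ᵢ h / h)² = (1/2)(d/2−1)²(Σⱼ λⱼ/sⱼ)⁻¹. -/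
/-- The Poisson predictive Laplacian
`(Δ̊ f)(λ) = Σᵢ sᵢ (λᵢ ∂²f/∂λᵢ² + (1/2) ∂f/∂λᵢ)`. -/
noncomputable def poissonLap {d : ℕ} (s : Fin d → ℝ) (f : (Fin d → ℝ) → ℝ)
    (l : Fin d → ℝ) : ℝ :=
  ∑ i, s i * (l i * pderiv2 i i f l + (1 / 2) * pderiv1 i f l)

open Finset

section PowerOfLinearFunctional

variable {d : ℕ} (L : (Fin d → ℝ) →L[ℝ] ℝ) (p : ℝ)

theorem hasFDerivAt_clm_rpow {x : Fin d → ℝ} (hx : L x ≠ 0) :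
    HasFDerivAt (fun m => L m ^ p) ((p * L x ^ (p - 1)) • L) x :=
  L.hasFDerivAt.rpow_const (Or.inl hx)

theorem pderiv1_clm_rpow (i : Fin d) {x : Fin d → ℝ} (hx : L x ≠ 0) :
    pderiv1 i (fun m => L m ^ p) x = p * L x ^ (p - 1) * L (Pi.single i 1) := by
  simp [pderiv1, (hasFDerivAt_clm_rpow L p hx).fderiv, mul_assoc]

theorem pderiv2_clm_rpow (i j : Fin d) {x : Fin d → ℝ} (hx : L x ≠ 0) :
    pderiv2 i j (fun m => L m ^ p) x =
      p * (p - 1) * L x ^ (p - 2) * L (Pi.single i 1) * L (Pi.single j 1) := by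
  have hfirst : (pderiv1 j fun m => L m ^ p) =ᶠ[nhds x]
      fun y => p * L y ^ (p - 1) * L (Pi.single j 1) :=
    Filter.eventuallyEq_of_mem (isOpen_ne_fun L.continuous continuous_const |>.mem_nhds hx)
      fun y hy => pderiv1_clm_rpow L p j hy
  have hderiv := ((hasFDerivAt_clm_rpow L (p - 1) hx).const_mul p).mul_const (L (Pi.single j 1))
  rw [pderiv2, pderiv1, hfirst.fderiv_eq, hderiv.fderiv, show p - 1 - 1 = p - 2 by ring]
  simp only [smul_apply, smul_eq_mul]
  ring

end PowerOfLinearFunctional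

section WeightedSum

variable {d : ℕ} (s : Fin d → ℝ)

noncomputable def weightedSumCLM : (Fin d → ℝ) →L[ℝ] ℝ :=
  ∑ j, (s j)⁻¹ • ContinuousLinearMap.proj j

theorem weightedSumCLM_apply (m : Fin d → ℝ) : weightedSumCLM s m = ∑ j, m j / s j := by
  simp [weightedSumCLM, div_eq_inv_mul]

theorem weightedSumCLM_single (i : Fin d) : weightedSumCLM s (Pi.single i 1) = (s i)⁻¹ := by
  simp [weightedSumCLM_apply, Pi.single_apply, ite_div]

theorem weightedSum_rpow_eq (p : ℝ) :
    (fun m : Fin d → ℝ => (∑ j, m j / s j) ^ p) = fun m => weightedSumCLM s m ^ p := by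
  simp only [weightedSumCLM_apply]

theorem poissonLap_weightedSum_rpow (hs : ∀ i, s i ≠ 0) (p : ℝ) {l : Fin d → ℝ}
    (hl : ∑ j, l j / s j ≠ 0) :
    poissonLap s (fun m => (∑ j, m j / s j) ^ p) l =
      p * (p - 1 + d / 2) * (∑ j, l j / s j) ^ (p - 1) := by
  rw [← weightedSumCLM_apply] at hl ⊢
  have hterm : ∀ i, s i * (l i * pderiv2 i i (fun m => weightedSumCLM s m ^ p) l
        + 1 / 2 * pderiv1 i (fun m => weightedSumCLM s m ^ p) l)
      = p * (p - 1) * weightedSumCLM s l ^ (p - 2) * (l i / s i)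
        + p / 2 * weightedSumCLM s l ^ (p - 1) := by
    intro i
    rw [pderiv2_clm_rpow _ _ _ _ hl, pderiv1_clm_rpow _ _ _ hl, weightedSumCLM_single]
    field_simp [hs i]
  rw [poissonLap, weightedSum_rpow_eq, sum_congr rfl fun i _ => hterm i, sum_add_distrib,
    ← mul_sum, ← weightedSumCLM_apply, sum_const, card_univ, Fintype.card_fin, nsmul_eq_mul,
    show p - 1 = p - 2 + 1 by ring, Real.rpow_add_one hl]
  ring

theorem sum_mul_sq_pderiv1_weightedSum_rpow_div (hs : ∀ i, s i ≠ 0) (p : ℝ) {l : Fin d → ℝ}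
    (hl : 0 < ∑ j, l j / s j) :
    ∑ i, s i * l i * (pderiv1 i (fun m => (∑ j, m j / s j) ^ p) l
        / (∑ j, l j / s j) ^ p) ^ 2 = p ^ 2 / ∑ j, l j / s j := by
  rw [← weightedSumCLM_apply] at hl ⊢
  have hpow : weightedSumCLM s l ^ p ≠ 0 := (Real.rpow_pos_of_pos hl p).ne'
  have hterm : ∀ i, s i * l i * (pderiv1 i (fun m => weightedSumCLM s m ^ p) l
        / weightedSumCLM s l ^ p) ^ 2 = l i / s i * (p ^ 2 / weightedSumCLM s l ^ 2) := by
    intro i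
    rw [pderiv1_clm_rpow _ _ _ hl.ne', weightedSumCLM_single, Real.rpow_sub_one hl.ne']
    field_simp [hs i]
  rw [weightedSum_rpow_eq, sum_congr rfl fun i _ => hterm i, ← sum_mul, ← weightedSumCLM_apply]
  field_simp

end WeightedSum

theorem poisson_asymptotic_risk_difference
    (d : ℕ) (hd : 1 ≤ d) (s : Fin d → ℝ) (hs : ∀ i, 0 < s i) :
    ∀ l : Fin d → ℝ, (∀ i, 0 < l i) →
      (poissonLap s (fun m => (∑ j, m j / s j) ^ (-((d : ℝ) / 2 - 1))) l
          / (∑ j, l j / s j) ^ (-((d : ℝ) / 2 - 1))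
        - (1 / 2) * ∑ i, s i * l i *
            (pderiv1 i (fun m => (∑ j, m j / s j) ^ (-((d : ℝ) / 2 - 1))) l
              / (∑ j, l j / s j) ^ (-((d : ℝ) / 2 - 1))) ^ 2
        = -(1 / 2) * ((d : ℝ) / 2 - 1) ^ 2 * (∑ j, l j / s j)⁻¹)
      ∧ ((1 / 2) * ∑ i, s i * l i *
            (pderiv1 i (fun m => (∑ j, m j / s j) ^ (-((d : ℝ) / 2 - 1))) l
              / (∑ j, l j / s j) ^ (-((d : ℝ) / 2 - 1))) ^ 2
        = (1 / 2) * ((d : ℝ) / 2 - 1) ^ 2 * (∑ j, l j / s j)⁻¹) := by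
  intro l hl
  have hs' : ∀ i, s i ≠ 0 := fun i => (hs i).ne'
  have hsum : 0 < ∑ j, l j / s j :=
    sum_pos (fun i _ => div_pos (hl i) (hs i)) (univ_nonempty_iff.mpr (Fin.pos_iff_nonempty.mp hd))
  have hgrad := sum_mul_sq_pderiv1_weightedSum_rpow_div s hs' (-((d : ℝ) / 2 - 1)) hsum
  have hharmonic : poissonLap s (fun m => (∑ j, m j / s j) ^ (-((d : ℝ) / 2 - 1))) l = 0 := by
    rw [poissonLap_weightedSum_rpow s hs' _ hsum.ne']
    ring
  rw [hharmonic, hgrad, zero_div]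
  constructor <;> ring
end

section
/- Let d ≥ 3, let a₁,…,a_d > 0, b₁,…,b_d > 0, s₁,…,s_d > 0 be real constants, and assume Σᵢ aᵢ > d/2 − 1. Then both of the following integrals are finite and they are equal: ∫_{(0,∞)^d} ( Σⱼ λⱼ/sⱼ )^{−(d/2−1)} · Πᵢ λᵢ^{aᵢ−1} e^{−bᵢλᵢ} dλ = ( Πᵢ Γ(aᵢ) / Γ(d/2 − 1) ) · ∫₀^∞ u^{d/2−2} · Πᵢ ( bᵢ + u/sᵢ )^{−aᵢ} du, where Γ is the real Gamma function. -/
/-!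
Write `T(λ) = Σⱼ λⱼ/sⱼ` and `c = d/2 - 1`. For `T > 0` the Gamma integral gives
`Γ(c) T^{-c} = ∫₀^∞ u^{c-1} e^{-uT} du`, so the left-hand side times `Γ(c)` is the integral of the
nonnegative function `u^{c-1} e^{-uT(λ)} Πᵢ λᵢ^{aᵢ-1} e^{-bᵢλᵢ}` over `(0,∞)^d × (0,∞)`. For fixed
`u` this function factorises as `u^{c-1} Πᵢ λᵢ^{aᵢ-1} e^{-(bᵢ + u/sᵢ)λᵢ}`, whose `λ`-integral is
`Πᵢ Γ(aᵢ) · u^{c-1} Πᵢ (bᵢ + u/sᵢ)^{-aᵢ}`. That function of `u` is integrable (it behaves like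
`u^{c-1}` at `0` and like `u^{c-1-Σaᵢ}` at `∞`), so the joint integrand is integrable and Fubini
applies.
-/

open MeasureTheory Real Set

section GammaIntegral

variable {p r : ℝ}

lemma integrableOn_rpow_mul_exp_neg_mul (hp : 0 < p) (hr : 0 < r) :
    IntegrableOn (fun t : ℝ => t ^ (p - 1) * exp (-(r * t))) (Ioi 0) := by
  simpa only [rpow_one, neg_mul] using
    integrableOn_rpow_mul_exp_neg_mul_rpow (s := p - 1) (by linarith) one_pos hr

lemma integral_rpow_mul_exp_neg_mul_Ioi_eq_Gamma_mul (hp : 0 < p) (hr : 0 < r) :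
    ∫ t in Ioi 0, t ^ (p - 1) * exp (-(r * t)) = Gamma p * r ^ (-p) := by
  rw [integral_rpow_mul_exp_neg_mul_Ioi hp hr, one_div, inv_rpow hr.le, ← rpow_neg hr.le,
    mul_comm]

end GammaIntegral

section Orthant

variable {ι : Type*} [Fintype ι]

lemma volume_restrict_pi_Ioi :
    (volume : Measure (ι → ℝ)).restrict (univ.pi fun _ => Ioi 0)
      = Measure.pi fun _ => volume.restrict (Ioi 0) := by
  rw [volume_pi, Measure.restrict_pi_pi]

lemma ae_restrict_pi_Ioi :
    ∀ᵐ l ∂(volume : Measure (ι → ℝ)).restrict (univ.pi fun _ => Ioi 0), ∀ i, 0 < l i := by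
  filter_upwards [ae_restrict_mem (MeasurableSet.univ_pi fun _ => measurableSet_Ioi)] with l hl
  exact fun i => hl i (mem_univ i)

variable {a r : ι → ℝ}

lemma integrableOn_prod_rpow_mul_exp_neg_mul (ha : ∀ i, 0 < a i) (hr : ∀ i, 0 < r i) :
    IntegrableOn (fun l : ι → ℝ => ∏ i, (l i ^ (a i - 1) * exp (-(r i * l i))))
      (univ.pi fun _ => Ioi 0) := by
  rw [IntegrableOn, volume_restrict_pi_Ioi]
  exact Integrable.fintype_prod fun i => integrableOn_rpow_mul_exp_neg_mul (ha i) (hr i)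

lemma integral_prod_rpow_mul_exp_neg_mul (ha : ∀ i, 0 < a i) (hr : ∀ i, 0 < r i) :
    ∫ l in univ.pi fun _ => Ioi 0, ∏ i, (l i ^ (a i - 1) * exp (-(r i * l i)))
      = ∏ i, Gamma (a i) * r i ^ (-a i) := by
  rw [volume_restrict_pi_Ioi,
    integral_fintype_prod_eq_prod (fun i (t : ℝ) => t ^ (a i - 1) * exp (-(r i * t)))]
  exact Finset.prod_congr rfl fun i _ =>
    integral_rpow_mul_exp_neg_mul_Ioi_eq_Gamma_mul (ha i) (hr i)

end Orthant

section TailBounds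

variable {ι : Type*} [Fintype ι] {a b s : ι → ℝ}

lemma prod_add_div_rpow_neg_le_prod_rpow_neg (ha : ∀ i, 0 < a i) (hb : ∀ i, 0 < b i)
    (hs : ∀ i, 0 < s i) {u : ℝ} (hu : 0 ≤ u) :
    ∏ i, (b i + u / s i) ^ (-a i) ≤ ∏ i, b i ^ (-a i) :=
  Finset.prod_le_prod (fun i _ => by have := hb i; have := hs i; positivity) fun i _ =>
    rpow_le_rpow_of_nonpos (hb i) (le_add_of_nonneg_right (div_nonneg hu (hs i).le))
      (neg_nonpos.mpr (ha i).le)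

lemma prod_add_div_rpow_neg_le_mul_rpow_neg_sum (ha : ∀ i, 0 < a i) (hb : ∀ i, 0 < b i)
    (hs : ∀ i, 0 < s i) {u : ℝ} (hu : 0 < u) :
    ∏ i, (b i + u / s i) ^ (-a i) ≤ (∏ i, s i ^ a i) * u ^ (-∑ i, a i) := by
  have hterm : ∀ i, (b i + u / s i) ^ (-a i) ≤ s i ^ a i * u ^ (-a i) := fun i => by
    have hus : 0 < u / s i := div_pos hu (hs i)
    calc (b i + u / s i) ^ (-a i) ≤ (u / s i) ^ (-a i) :=
          rpow_le_rpow_of_nonpos hus (le_add_of_nonneg_left (hb i).le) (neg_nonpos.mpr (ha i).le)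
      _ = s i ^ a i * u ^ (-a i) := by
          rw [div_rpow hu.le (hs i).le, rpow_neg (hs i).le, div_inv_eq_mul, mul_comm]
  calc ∏ i, (b i + u / s i) ^ (-a i) ≤ ∏ i, (s i ^ a i * u ^ (-a i)) :=
        Finset.prod_le_prod (fun i _ => by have := hb i; have := hs i; positivity)
          fun i _ => hterm i
    _ = (∏ i, s i ^ a i) * u ^ (-∑ i, a i) := by
        rw [Finset.prod_mul_distrib, ← rpow_sum_of_pos hu, Finset.sum_neg_distrib]

lemma integrableOn_rpow_mul_prod_add_div_rpow_neg (ha : ∀ i, 0 < a i) (hb : ∀ i, 0 < b i)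
    (hs : ∀ i, 0 < s i) {c : ℝ} (hc : 0 < c) (hca : c < ∑ i, a i) :
    IntegrableOn (fun u : ℝ => u ^ (c - 1) * ∏ i, (b i + u / s i) ^ (-a i)) (Ioi 0) := by
  have hmeas : AEStronglyMeasurable (fun u : ℝ => u ^ (c - 1) * ∏ i, (b i + u / s i) ^ (-a i)) :=
    by fun_prop
  have hnorm : ∀ u : ℝ, 0 < u →
      ‖u ^ (c - 1) * ∏ i, (b i + u / s i) ^ (-a i)‖ = u ^ (c - 1) * ∏ i, (b i + u / s i) ^ (-a i) :=
    fun u hu => norm_of_nonneg <| mul_nonneg (rpow_nonneg hu.le _) <|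
      Finset.prod_nonneg fun i _ => by have := hb i; have := hs i; positivity
  have near_zero : IntegrableOn (fun u : ℝ => u ^ (c - 1) * ∏ i, (b i + u / s i) ^ (-a i))
      (Ioc 0 1) := by
    have hdom : IntegrableOn (fun u : ℝ => u ^ (c - 1) * ∏ i, b i ^ (-a i)) (Ioc 0 1) := by
      refine Integrable.mul_const ?_ _
      rw [← IntegrableOn, ← intervalIntegrable_iff_integrableOn_Ioc_of_le zero_le_one]
      exact intervalIntegral.intervalIntegrable_rpow' (by linarith)
    refine hdom.mono' hmeas.restrict ?_
    filter_upwards [ae_restrict_mem measurableSet_Ioc] with u hu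
    rw [hnorm u hu.1]
    exact mul_le_mul_of_nonneg_left (prod_add_div_rpow_neg_le_prod_rpow_neg ha hb hs hu.1.le)
      (rpow_nonneg hu.1.le _)
  have near_infty : IntegrableOn (fun u : ℝ => u ^ (c - 1) * ∏ i, (b i + u / s i) ^ (-a i))
      (Ioi 1) := by
    have hdom : IntegrableOn (fun u : ℝ => u ^ (c - 1 - ∑ i, a i) * ∏ i, s i ^ a i) (Ioi 1) :=
      Integrable.mul_const ((integrableOn_Ioi_rpow_iff zero_lt_one).2 (by linarith)) _
    refine hdom.mono' hmeas.restrict ?_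
    filter_upwards [ae_restrict_mem measurableSet_Ioi] with u hu
    have hu0 : 0 < u := zero_lt_one.trans hu
    calc ‖u ^ (c - 1) * ∏ i, (b i + u / s i) ^ (-a i)‖
        = u ^ (c - 1) * ∏ i, (b i + u / s i) ^ (-a i) := hnorm u hu0
      _ ≤ u ^ (c - 1) * ((∏ i, s i ^ a i) * u ^ (-∑ i, a i)) :=
          mul_le_mul_of_nonneg_left (prod_add_div_rpow_neg_le_mul_rpow_neg_sum ha hb hs hu0)
            (rpow_nonneg hu0.le _)
      _ = u ^ (c - 1 - ∑ i, a i) * ∏ i, s i ^ a i := by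
          rw [sub_eq_add_neg _ (∑ i, a i), rpow_add hu0]; ring
  simpa only [Ioc_union_Ioi_eq_Ioi zero_le_one] using near_zero.union near_infty

end TailBounds

section Mixture

variable {ι : Type*} [Fintype ι] (a b s : ι → ℝ) (c : ℝ)

noncomputable def mixtureIntegrand (l : ι → ℝ) (u : ℝ) : ℝ :=
  u ^ (c - 1) * exp (-((∑ j, l j / s j) * u)) * ∏ i, (l i ^ (a i - 1) * exp (-(b i * l i)))

lemma mixtureIntegrand_eq_mul_prod (l : ι → ℝ) (u : ℝ) :
    mixtureIntegrand a b s c l u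
      = u ^ (c - 1) * ∏ i, (l i ^ (a i - 1) * exp (-((b i + u / s i) * l i))) := by
  have hexp : exp (-((∑ j, l j / s j) * u)) = ∏ i, exp (-(u / s i * l i)) := by
    rw [← exp_sum, Finset.sum_mul, ← Finset.sum_neg_distrib]
    exact congrArg exp (Finset.sum_congr rfl fun i _ => by ring)
  rw [mixtureIntegrand, mul_assoc, hexp, ← Finset.prod_mul_distrib]
  congr 1
  refine Finset.prod_congr rfl fun i _ => ?_
  rw [mul_left_comm, ← exp_add]
  ring_nf

variable {a b s c}

lemma mixtureIntegrand_nonneg {l : ι → ℝ} (hl : ∀ i, 0 < l i) {u : ℝ} (hu : 0 < u) :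
    0 ≤ mixtureIntegrand a b s c l u := by
  have hfactor : ∀ i, 0 ≤ l i ^ (a i - 1) * exp (-(b i * l i)) := fun i => by
    have := hl i; positivity
  exact mul_nonneg (by positivity) (Finset.prod_nonneg fun i _ => hfactor i)

lemma integral_mixtureIntegrand_Ioi [Nonempty ι] (hs : ∀ i, 0 < s i) (hc : 0 < c)
    {l : ι → ℝ} (hl : ∀ i, 0 < l i) :
    ∫ u in Ioi 0, mixtureIntegrand a b s c l u
      = Gamma c * ((∑ j, l j / s j) ^ (-c) * ∏ i, (l i ^ (a i - 1) * exp (-(b i * l i)))) := by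
  have hT : 0 < ∑ j, l j / s j :=
    Finset.sum_pos (fun j _ => div_pos (hl j) (hs j)) Finset.univ_nonempty
  simp_rw [mixtureIntegrand, integral_mul_const, ← mul_assoc,
    integral_rpow_mul_exp_neg_mul_Ioi_eq_Gamma_mul hc hT]

lemma integrableOn_mixtureIntegrand_orthant (ha : ∀ i, 0 < a i) (hb : ∀ i, 0 < b i)
    (hs : ∀ i, 0 < s i) {u : ℝ} (hu : 0 < u) :
    IntegrableOn (fun l => mixtureIntegrand a b s c l u) (univ.pi fun _ => Ioi 0) := by
  simp_rw [mixtureIntegrand_eq_mul_prod]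
  exact (integrableOn_prod_rpow_mul_exp_neg_mul ha
    fun i => add_pos (hb i) (div_pos hu (hs i))).const_mul _

lemma integral_mixtureIntegrand_orthant (ha : ∀ i, 0 < a i) (hb : ∀ i, 0 < b i)
    (hs : ∀ i, 0 < s i) {u : ℝ} (hu : 0 < u) :
    ∫ l in univ.pi fun _ => Ioi 0, mixtureIntegrand a b s c l u
      = (∏ i, Gamma (a i)) * (u ^ (c - 1) * ∏ i, (b i + u / s i) ^ (-a i)) := by
  simp_rw [mixtureIntegrand_eq_mul_prod, integral_const_mul,
    integral_prod_rpow_mul_exp_neg_mul ha fun i => add_pos (hb i) (div_pos hu (hs i)),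
    Finset.prod_mul_distrib]
  ring

lemma integrable_mixtureIntegrand (ha : ∀ i, 0 < a i) (hb : ∀ i, 0 < b i) (hs : ∀ i, 0 < s i)
    (hc : 0 < c) (hca : c < ∑ i, a i) :
    Integrable (Function.uncurry (mixtureIntegrand a b s c))
      (((volume : Measure (ι → ℝ)).restrict (univ.pi fun _ => Ioi 0)).prod
        (volume.restrict (Ioi 0))) := by
  have hmeas : Measurable (Function.uncurry (mixtureIntegrand a b s c)) := by
    unfold Function.uncurry mixtureIntegrand; fun_prop
  refine (integrable_prod_iff' hmeas.aestronglyMeasurable).2 ⟨?_, ?_⟩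
  · filter_upwards [ae_restrict_mem measurableSet_Ioi] with u hu
    exact integrableOn_mixtureIntegrand_orthant ha hb hs hu
  · refine ((integrableOn_rpow_mul_prod_add_div_rpow_neg ha hb hs hc hca).const_mul
      (∏ i, Gamma (a i))).congr ?_
    filter_upwards [ae_restrict_mem measurableSet_Ioi] with u hu
    rw [← integral_mixtureIntegrand_orthant ha hb hs hu]
    refine integral_congr_ae ?_
    filter_upwards [ae_restrict_pi_Ioi] with l hl
    exact (norm_of_nonneg (mixtureIntegrand_nonneg hl hu)).symm

theorem integral_rpow_neg_sum_div_mul_prod_eq (ha : ∀ i, 0 < a i) (hb : ∀ i, 0 < b i)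
    (hs : ∀ i, 0 < s i) (hc : 0 < c) (hca : c < ∑ i, a i) :
    IntegrableOn
      (fun l : ι → ℝ => (∑ j, l j / s j) ^ (-c) * ∏ i, (l i ^ (a i - 1) * exp (-(b i * l i))))
      (univ.pi fun _ => Ioi 0)
    ∧ ∫ l in univ.pi fun _ => Ioi 0,
        (∑ j, l j / s j) ^ (-c) * ∏ i, (l i ^ (a i - 1) * exp (-(b i * l i)))
      = (∏ i, Gamma (a i)) / Gamma c
          * ∫ u in Ioi 0, u ^ (c - 1) * ∏ i, (b i + u / s i) ^ (-a i) := by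
  have : Nonempty ι := by
    refine (isEmpty_or_nonempty ι).resolve_left fun _ => ?_
    simp only [Finset.univ_eq_empty, Finset.sum_empty] at hca
    linarith
  have hΓ : Gamma c ≠ 0 := (Gamma_pos_of_pos hc).ne'
  have hF := integrable_mixtureIntegrand ha hb hs hc hca
  have hinner : (fun l => ∫ u in Ioi 0, mixtureIntegrand a b s c l u)
      =ᵐ[(volume : Measure (ι → ℝ)).restrict (univ.pi fun _ => Ioi 0)] fun l =>
        Gamma c * ((∑ j, l j / s j) ^ (-c) * ∏ i, (l i ^ (a i - 1) * exp (-(b i * l i)))) := by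
    filter_upwards [ae_restrict_pi_Ioi] with l hl using integral_mixtureIntegrand_Ioi hs hc hl
  refine ⟨?_, ?_⟩
  · refine (((hF.integral_prod_left).congr hinner).const_mul (Gamma c)⁻¹).congr
      (ae_of_all _ fun l => ?_)
    field_simp
  · have hswap := integral_integral_swap hF
    rw [integral_congr_ae hinner, integral_const_mul,
      setIntegral_congr_fun measurableSet_Ioi
        fun u hu => integral_mixtureIntegrand_orthant ha hb hs hu, integral_const_mul] at hswap
    rw [div_mul_eq_mul_div, eq_div_iff hΓ, mul_comm, hswap]

end Mixture

theorem gamma_representation_interchange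
    (d : ℕ) (hd : 3 ≤ d) (a b s : Fin d → ℝ)
    (ha : ∀ i, 0 < a i) (hb : ∀ i, 0 < b i) (hs : ∀ i, 0 < s i)
    (hsum : (d : ℝ) / 2 - 1 < ∑ i, a i) :
    IntegrableOn
      (fun l : Fin d → ℝ =>
        (∑ j, l j / s j) ^ (-((d : ℝ) / 2 - 1))
          * ∏ i, (l i ^ (a i - 1) * Real.exp (-(b i * l i))))
      (Set.univ.pi fun _ : Fin d => Set.Ioi (0 : ℝ))
    ∧ IntegrableOn
      (fun u : ℝ => u ^ ((d : ℝ) / 2 - 2) * ∏ i, (b i + u / s i) ^ (-(a i)))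
      (Set.Ioi (0 : ℝ))
    ∧ (∫ l in Set.univ.pi fun _ : Fin d => Set.Ioi (0 : ℝ),
        (∑ j, l j / s j) ^ (-((d : ℝ) / 2 - 1))
          * ∏ i, (l i ^ (a i - 1) * Real.exp (-(b i * l i))))
      = ((∏ i, Real.Gamma (a i)) / Real.Gamma ((d : ℝ) / 2 - 1))
          * ∫ u in Set.Ioi (0 : ℝ),
              u ^ ((d : ℝ) / 2 - 2) * ∏ i, (b i + u / s i) ^ (-(a i)) := by
  have hc : 0 < (d : ℝ) / 2 - 1 := by
    have : (3 : ℝ) ≤ d := by exact_mod_cast hd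
    linarith
  have hexp : (d : ℝ) / 2 - 2 = (d : ℝ) / 2 - 1 - 1 := by ring
  rw [hexp]
  obtain ⟨hf, heq⟩ := integral_rpow_neg_sum_div_mul_prod_eq ha hb hs hc hsum
  exact ⟨hf, integrableOn_rpow_mul_prod_add_div_rpow_neg ha hb hs hc hsum, heq⟩
end
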